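/- Let 𝐗 = (X,𝕏) be a p-rough path controlled by ω on [0,T] and (H,H') ∈ 𝒟_X(ℝ^e). Then the geometrisation of the lift equals the lift along the geometrisation: g(↑_𝕏(H,H')) = ↑_{g𝕏}(H,H'). In particular, if 𝐗 is geometric then ↑_𝕏(H,H') is geometric. -/

import Mathlib

open Filter Topology Set

noncomputable section

/-- `ω` is a control on `[0,T]`: continuous on the simplex, vanishing on the diagonal,
superadditive and nonnegative. -/
def IsControl (T : ℝ) (ω : ℝ → ℝ → ℝ) : Prop :=
  ContinuousOn (fun q : ℝ × ℝ => ω q.1 q.2) {q : ℝ × ℝ | 0 ≤ q.1 ∧ q.1 ≤ q.2 ∧ q.2 ≤ T} ∧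
    (∀ t : ℝ, 0 ≤ t → t ≤ T → ω t t = 0) ∧
    (∀ s u t : ℝ, 0 ≤ s → s ≤ u → u ≤ t → t ≤ T → ω s u + ω u t ≤ ω s t) ∧
    (∀ s t : ℝ, 0 ≤ s → s ≤ t → t ≤ T → 0 ≤ ω s t)

/-- Membership in `C^{1/r}_ω([0,T],V)`: continuity on `[0,T]` together with the increment
bound `‖Y_t − Y_s‖ ≤ C ω(s,t)^r`. -/
def HolderPath (T r : ℝ) (ω : ℝ → ℝ → ℝ) {V : Type*} [NormedAddCommGroup V]
    (Y : ℝ → V) : Prop :=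
  ContinuousOn Y (Set.Icc 0 T) ∧
    ∃ C : ℝ, ∀ s t : ℝ, 0 ≤ s → s ≤ t → t ≤ T → ‖Y t - Y s‖ ≤ C * ω s t ^ r

/-- `(X, XX)` is a `p`-rough path controlled by `ω` on `[0,T]`. -/
def IsRoughPath (T p : ℝ) (ω : ℝ → ℝ → ℝ) {d : ℕ}
    (X : ℝ → Fin d → ℝ) (XX : ℝ → ℝ → Fin d → Fin d → ℝ) : Prop :=
  HolderPath T (1 / p) ω X ∧
    ContinuousOn (fun q : ℝ × ℝ => XX q.1 q.2) {q : ℝ × ℝ | 0 ≤ q.1 ∧ q.1 ≤ q.2 ∧ q.2 ≤ T} ∧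
    (∃ C : ℝ, ∀ s t : ℝ, 0 ≤ s → s ≤ t → t ≤ T → ‖XX s t‖ ≤ C * ω s t ^ (2 / p)) ∧
    (∀ s u t : ℝ, 0 ≤ s → s ≤ u → u ≤ t → t ≤ T → ∀ α β : Fin d,
      XX s t α β = XX s u α β + (X u α - X s α) * (X t β - X u β) + XX u t α β)

/-- `(H, H')` is an `X`-controlled path with values in `V`; `H' t γ` is the Gubinelli
derivative at time `t` in the direction of the `γ`-th coordinate. -/
def IsControlledPath (T p : ℝ) (ω : ℝ → ℝ → ℝ) {d : ℕ} (X : ℝ → Fin d → ℝ)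
    {V : Type*} [NormedAddCommGroup V] [NormedSpace ℝ V]
    (H : ℝ → V) (H' : ℝ → Fin d → V) : Prop :=
  HolderPath T (1 / p) ω H ∧ HolderPath T (1 / p) ω H' ∧
    ∃ C : ℝ, ∀ s t : ℝ, 0 ≤ s → s ≤ t → t ≤ T →
      ‖H t - H s - ∑ γ, (X t γ - X s γ) • H' s γ‖ ≤ C * ω s t ^ (2 / p)

/-- The bracket `[𝐗]` of the rough path `(X, XX)`. -/
def bracket {d : ℕ} (X : ℝ → Fin d → ℝ) (XX : ℝ → ℝ → Fin d → Fin d → ℝ)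
    (s t : ℝ) (α β : Fin d) : ℝ :=
  (X t α - X s α) * (X t β - X s β) - (XX s t α β + XX s t β α)

/-- A partition of `[s,t]` into `n` consecutive intervals. -/
structure TimePartition (s t : ℝ) where
  n : ℕ
  pts : ℕ → ℝ
  mono : Monotone pts
  first : pts 0 = s
  last : pts n = t

/-- The mesh of a partition. -/
def TimePartition.mesh {s t : ℝ} (π : TimePartition s t) : ℝ :=
  ⨆ i : Fin π.n, (π.pts (i.1 + 1) - π.pts i.1)

/-- The Riemann sum of a two-parameter summand along a partition. -/
def riemannSum {s t : ℝ} {V : Type*} [AddCommMonoid V]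
    (π : TimePartition s t) (f : ℝ → ℝ → V) : V :=
  ∑ i ∈ Finset.range π.n, f (π.pts i) (π.pts (i + 1))

/-- `L` is the limit of the Riemann sums of `f` along every sequence of partitions of `[s,t]`
with mesh tending to `0`. -/
def RSumLimit {V : Type*} [AddCommMonoid V] [TopologicalSpace V] (s t : ℝ)
    (f : ℝ → ℝ → V) (L : V) : Prop :=
  ∀ π : ℕ → TimePartition s t,
    Tendsto (fun n => (π n).mesh) atTop (𝓝 0) →
      Tendsto (fun n => riemannSum (π n) f) atTop (𝓝 L)

/-- The compensated Riemann summand `H_u X_{uv} + H'_u 𝕏_{uv}` of a controlled integrand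
against a rough path. -/
def roughSummand {d e : ℕ} (X : ℝ → Fin d → ℝ) (XX : ℝ → ℝ → Fin d → Fin d → ℝ)
    (H : ℝ → Fin e → Fin d → ℝ) (H' : ℝ → Fin d → Fin e → Fin d → ℝ) :
    ℝ → ℝ → Fin e → ℝ :=
  fun u v k => (∑ γ, H u k γ * (X v γ - X u γ)) + ∑ α, ∑ β, H' u α k β * XX u v α β

/-- The partial derivative `∂_α f^i (x)`. -/
def pderiv {m n : ℕ} (f : (Fin m → ℝ) → (Fin n → ℝ)) (x : Fin m → ℝ)
    (α : Fin m) (i : Fin n) : ℝ :=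
  fderiv ℝ f x (Pi.single α 1) i

/-- The second partial derivative `∂_{αβ} f^k (x)`. -/
def pderiv2 {m n : ℕ} (f : (Fin m → ℝ) → (Fin n → ℝ)) (x : Fin m → ℝ)
    (α β : Fin m) (k : Fin n) : ℝ :=
  fderiv ℝ (fun y => fderiv ℝ f y (Pi.single β 1) k) x (Pi.single α 1)

/-!
Both `g ↑_𝕏(H,H')` and `↑_{g𝕏}(H,H')` are second-order parts over the same trace `H`
satisfying Chen's identity, so their difference `F` is additive: `F_{st} = F_{su} + F_{ut}`.
Expanding `H_{st} = H'_s X_{st} + R_{st}`, both agree with `H'_s ⊗ H'_s (g𝕏)_{st}` up to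
`O(ω(s,t)^θ)` with `θ > 1` (here `p < 3` gives `3/p > 1`). An additive function with such a
bound vanishes: halving `ω` by an intermediate point gains a factor `2^{1-θ} < 1` each time.
The same argument applied to the additive bracket `[↑_𝕏(H,H')] ≈ H' ⊗ H' [𝐗]` gives the
geometric case.
-/

namespace IsControl

variable {T : ℝ} {ω : ℝ → ℝ → ℝ}

lemma nonneg (hω : IsControl T ω) {s t : ℝ} (hs : 0 ≤ s) (hst : s ≤ t) (htT : t ≤ T) :
    0 ≤ ω s t :=
  hω.2.2.2 s t hs hst htT

lemma le_apply_zero (hω : IsControl T ω) {s t : ℝ} (hs : 0 ≤ s) (hst : s ≤ t) (htT : t ≤ T) :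
    ω s t ≤ ω 0 T := by
  have h0s := hω.2.2.1 0 s t le_rfl hs hst htT
  have h0t := hω.2.2.1 0 t T le_rfl (hs.trans hst) htT le_rfl
  linarith [hω.nonneg le_rfl hs (hst.trans htT), hω.nonneg (hs.trans hst) htT le_rfl]

lemma exists_halving (hω : IsControl T ω) {s t : ℝ} (hs : 0 ≤ s) (hst : s ≤ t)
    (htT : t ≤ T) : ∃ u ∈ Icc s t, ω s u ≤ ω s t / 2 ∧ ω u t ≤ ω s t / 2 := by
  have hst_nonneg := hω.nonneg hs hst htT
  obtain ⟨hcont, hdiag, hsup, -⟩ := hω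
  have hleft : ContinuousOn (fun u => ω s u) (Icc s t) :=
    hcont.comp (f := fun u => (s, u)) (Continuous.continuousOn (by fun_prop))
      fun u hu => ⟨hs, hu.1, hu.2.trans htT⟩
  have hright : ContinuousOn (fun u => ω u t) (Icc s t) :=
    hcont.comp (f := fun u => (u, t)) (Continuous.continuousOn (by fun_prop))
      fun u hu => ⟨hs.trans hu.1, hu.2, htT⟩
  -- `u ↦ ω(s,u) - ω(u,t)` runs from `-ω(s,t)` to `ω(s,t)`; take a zero of it.
  have hzero : (0 : ℝ) ∈ Icc (ω s s - ω s t) (ω s t - ω t t) := by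
    rw [hdiag s hs (hst.trans htT), hdiag t (hs.trans hst) htT]
    constructor <;> linarith
  obtain ⟨u, hu, hsu_ut⟩ := intermediate_value_Icc hst (hleft.sub hright) hzero
  rw [Pi.sub_apply, sub_eq_zero] at hsu_ut
  have := hsup s u t hs hu.1 hu.2 htT
  exact ⟨u, hu, by linarith, by linarith⟩

lemma rpow_le_mul_rpow (hω : IsControl T ω) {s t r r' : ℝ} (hs : 0 ≤ s) (hst : s ≤ t)
    (htT : t ≤ T) (hr' : 0 ≤ r') (hrr' : r' ≤ r) :
    ω s t ^ r ≤ max (ω 0 T) 1 ^ (r - r') * ω s t ^ r' := by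
  have hω0 := hω.nonneg hs hst htT
  calc ω s t ^ r = ω s t ^ (r - r') * ω s t ^ r' := by
        rw [← Real.rpow_add_of_nonneg hω0 (by linarith) hr', sub_add_cancel]
    _ ≤ max (ω 0 T) 1 ^ (r - r') * ω s t ^ r' := by
        gcongr
        exact (hω.le_apply_zero hs hst htT).trans (le_max_left _ _)

end IsControl

section Germs

variable {T : ℝ} {ω : ℝ → ℝ → ℝ} {V : Type*} [NormedAddCommGroup V]

def PowerBounded (T : ℝ) (ω : ℝ → ℝ → ℝ) (r : ℝ) (F : ℝ → ℝ → V) : Prop :=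
  ∃ C : ℝ, ∀ s t : ℝ, 0 ≤ s → s ≤ t → t ≤ T → ‖F s t‖ ≤ C * ω s t ^ r

def IsNegligible (T : ℝ) (ω : ℝ → ℝ → ℝ) (F : ℝ → ℝ → V) : Prop :=
  ∃ C θ : ℝ, 1 < θ ∧ ∀ s t : ℝ, 0 ≤ s → s ≤ t → t ≤ T → ‖F s t‖ ≤ C * ω s t ^ θ

def IsAdditive (T : ℝ) (F : ℝ → ℝ → V) : Prop :=
  ∀ s u t : ℝ, 0 ≤ s → s ≤ u → u ≤ t → t ≤ T → F s t = F s u + F u t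

namespace PowerBounded

variable {r : ℝ} {F G : ℝ → ℝ → V}

lemma exists_nonneg (hω : IsControl T ω) (hF : PowerBounded T ω r F) :
    ∃ C, 0 ≤ C ∧ ∀ s t : ℝ, 0 ≤ s → s ≤ t → t ≤ T → ‖F s t‖ ≤ C * ω s t ^ r := by
  obtain ⟨C, hC⟩ := hF
  refine ⟨max C 0, le_max_right _ _, fun s t hs hst htT => (hC s t hs hst htT).trans ?_⟩
  gcongr
  · exact Real.rpow_nonneg (hω.nonneg hs hst htT) _
  · exact le_max_left _ _

lemma congr (hF : PowerBounded T ω r F)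
    (hFG : ∀ s t : ℝ, 0 ≤ s → s ≤ t → t ≤ T → F s t = G s t) : PowerBounded T ω r G := by
  obtain ⟨C, hC⟩ := hF
  exact ⟨C, fun s t hs hst htT => hFG s t hs hst htT ▸ hC s t hs hst htT⟩

lemma mono (hω : IsControl T ω) {r' : ℝ} (hF : PowerBounded T ω r F) (hr' : 0 ≤ r')
    (hrr' : r' ≤ r) : PowerBounded T ω r' F := by
  obtain ⟨C, hC0, hC⟩ := hF.exists_nonneg hω
  refine ⟨C * max (ω 0 T) 1 ^ (r - r'), fun s t hs hst htT => ?_⟩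
  calc ‖F s t‖ ≤ C * ω s t ^ r := hC s t hs hst htT
    _ ≤ C * (max (ω 0 T) 1 ^ (r - r') * ω s t ^ r') := by
        gcongr; exact hω.rpow_le_mul_rpow hs hst htT hr' hrr'
    _ = _ := by ring

lemma add (hF : PowerBounded T ω r F) (hG : PowerBounded T ω r G) :
    PowerBounded T ω r (fun s t => F s t + G s t) := by
  obtain ⟨C, hC⟩ := hF
  obtain ⟨C', hC'⟩ := hG
  refine ⟨C + C', fun s t hs hst htT => ?_⟩
  calc ‖F s t + G s t‖ ≤ ‖F s t‖ + ‖G s t‖ := norm_add_le _ _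
    _ ≤ C * ω s t ^ r + C' * ω s t ^ r := add_le_add (hC s t hs hst htT) (hC' s t hs hst htT)
    _ = (C + C') * ω s t ^ r := by ring

lemma neg (hF : PowerBounded T ω r F) : PowerBounded T ω r (fun s t => -F s t) := by
  obtain ⟨C, hC⟩ := hF
  exact ⟨C, fun s t hs hst htT => (norm_neg (F s t)).symm ▸ hC s t hs hst htT⟩

lemma const_smul [NormedSpace ℝ V] (hF : PowerBounded T ω r F) (c : ℝ) :
    PowerBounded T ω r (fun s t => c • F s t) := by
  obtain ⟨C, hC⟩ := hF
  refine ⟨|c| * C, fun s t hs hst htT => ?_⟩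
  rw [norm_smul, Real.norm_eq_abs, mul_assoc]
  exact mul_le_mul_of_nonneg_left (hC s t hs hst htT) (abs_nonneg c)

lemma apply {ι : Type*} [Fintype ι] {E : ι → Type*} [∀ i, NormedAddCommGroup (E i)]
    {F : ℝ → ℝ → ∀ i, E i} (hF : PowerBounded T ω r F) (i : ι) :
    PowerBounded T ω r (fun s t => F s t i) := by
  obtain ⟨C, hC⟩ := hF
  exact ⟨C, fun s t hs hst htT => (norm_le_pi_norm (F s t) i).trans (hC s t hs hst htT)⟩

lemma mul {R : Type*} [NormedRing R] {a b : ℝ} {f g : ℝ → ℝ → R}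
    (hω : IsControl T ω) (ha : 0 ≤ a) (hb : 0 ≤ b) (hf : PowerBounded T ω a f)
    (hg : PowerBounded T ω b g) : PowerBounded T ω (a + b) (fun s t => f s t * g s t) := by
  obtain ⟨C, hC0, hC⟩ := hf.exists_nonneg hω
  obtain ⟨C', hC'⟩ := hg
  refine ⟨C * C', fun s t hs hst htT => ?_⟩
  have hω0 := hω.nonneg hs hst htT
  calc ‖f s t * g s t‖ ≤ ‖f s t‖ * ‖g s t‖ := norm_mul_le _ _
    _ ≤ (C * ω s t ^ a) * (C' * ω s t ^ b) :=
        mul_le_mul (hC s t hs hst htT) (hC' s t hs hst htT) (norm_nonneg _)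
          (mul_nonneg hC0 (Real.rpow_nonneg hω0 _))
    _ = C * C' * ω s t ^ (a + b) := by rw [Real.rpow_add_of_nonneg hω0 ha hb]; ring

lemma isNegligible {θ : ℝ} (hθ : 1 < θ) (hF : PowerBounded T ω θ F) : IsNegligible T ω F := by
  obtain ⟨C, hC⟩ := hF
  exact ⟨C, θ, hθ, hC⟩

end PowerBounded

namespace IsNegligible

variable {F G : ℝ → ℝ → V}

lemma exists_powerBounded (hF : IsNegligible T ω F) : ∃ θ, 1 < θ ∧ PowerBounded T ω θ F := by
  obtain ⟨C, θ, hθ, hC⟩ := hF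
  exact ⟨θ, hθ, C, hC⟩

lemma congr (hF : IsNegligible T ω F)
    (hFG : ∀ s t : ℝ, 0 ≤ s → s ≤ t → t ≤ T → F s t = G s t) : IsNegligible T ω G := by
  obtain ⟨θ, hθ, hF⟩ := hF.exists_powerBounded
  exact (hF.congr hFG).isNegligible hθ

lemma add (hω : IsControl T ω) (hF : IsNegligible T ω F) (hG : IsNegligible T ω G) :
    IsNegligible T ω (fun s t => F s t + G s t) := by
  obtain ⟨θ, hθ, hF⟩ := hF.exists_powerBounded
  obtain ⟨θ', hθ', hG⟩ := hG.exists_powerBounded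
  have hmin : 0 ≤ min θ θ' := by positivity
  exact ((hF.mono hω hmin (min_le_left _ _)).add (hG.mono hω hmin (min_le_right _ _))).isNegligible
    (lt_min hθ hθ')

lemma sub (hω : IsControl T ω) (hF : IsNegligible T ω F) (hG : IsNegligible T ω G) :
    IsNegligible T ω (fun s t => F s t - G s t) := by
  obtain ⟨θ, hθ, hG⟩ := hG.exists_powerBounded
  simpa only [sub_eq_add_neg] using hF.add hω (hG.neg.isNegligible hθ)

lemma const_smul [NormedSpace ℝ V] (hF : IsNegligible T ω F) (c : ℝ) :
    IsNegligible T ω (fun s t => c • F s t) := by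
  obtain ⟨θ, hθ, hF⟩ := hF.exists_powerBounded
  exact (hF.const_smul c).isNegligible hθ

lemma apply {ι : Type*} [Fintype ι] {E : ι → Type*} [∀ i, NormedAddCommGroup (E i)]
    {F : ℝ → ℝ → ∀ i, E i} (hF : IsNegligible T ω F) (i : ι) :
    IsNegligible T ω (fun s t => F s t i) := by
  obtain ⟨θ, hθ, hF⟩ := hF.exists_powerBounded
  exact (hF.apply i).isNegligible hθ

end IsNegligible

-- The uniqueness part of the sewing lemma.
lemma IsAdditive.eq_zero_of_isNegligible (hω : IsControl T ω) {F : ℝ → ℝ → V}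
    (hadd : IsAdditive T F) (hF : IsNegligible T ω F) {s t : ℝ} (hs : 0 ≤ s) (hst : s ≤ t)
    (htT : t ≤ T) : F s t = 0 := by
  obtain ⟨θ, hθ, hF⟩ := hF.exists_powerBounded
  obtain ⟨C, hC0, hC⟩ := hF.exists_nonneg hω
  set k : ℝ := 2 ^ (1 - θ) with hk
  have hk0 : 0 ≤ k := by positivity
  have hk1 : k < 1 := Real.rpow_lt_one_of_one_lt_of_neg one_lt_two (by linarith)
  have hhalf : ∀ x : ℝ, 0 ≤ x → 2 * (x / 2) ^ θ = k * x ^ θ := fun x hx => by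
    rw [Real.div_rpow hx zero_le_two, hk, Real.rpow_sub two_pos, Real.rpow_one]
    field_simp
  have hiter : ∀ n : ℕ, ∀ s t : ℝ, 0 ≤ s → s ≤ t → t ≤ T →
      ‖F s t‖ ≤ k ^ n * (C * ω s t ^ θ) := by
    intro n
    induction n with
    | zero => simpa using hC
    | succ n ih =>
      intro s t hs hst htT
      obtain ⟨u, ⟨hsu, hut⟩, hωsu, hωut⟩ := hω.exists_halving hs hst htT
      have hθ0 : 0 ≤ θ := by linarith
      calc ‖F s t‖ ≤ ‖F s u‖ + ‖F u t‖ := hadd s u t hs hsu hut htT ▸ norm_add_le _ _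
        _ ≤ k ^ n * (C * ω s u ^ θ) + k ^ n * (C * ω u t ^ θ) :=
            add_le_add (ih s u hs hsu (hut.trans htT)) (ih u t (hs.trans hsu) hut htT)
        _ ≤ k ^ n * (C * (ω s t / 2) ^ θ) + k ^ n * (C * (ω s t / 2) ^ θ) := by
            gcongr
            · exact hω.nonneg hs hsu (hut.trans htT)
            · exact hω.nonneg (hs.trans hsu) hut htT
        _ = k ^ n * C * (2 * (ω s t / 2) ^ θ) := by ring
        _ = k ^ (n + 1) * (C * ω s t ^ θ) := by
            rw [hhalf _ (hω.nonneg hs hst htT)]; ring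
  have hlim : Tendsto (fun n : ℕ => k ^ n * (C * ω s t ^ θ)) atTop (𝓝 0) := by
    simpa using (tendsto_pow_atTop_nhds_zero_of_lt_one hk0 hk1).mul_const (C * ω s t ^ θ)
  exact norm_le_zero_iff.mp
    (ge_of_tendsto' hlim fun n => hiter n s t hs hst htT)

end Germs

section RoughPaths

variable {T p : ℝ} {ω : ℝ → ℝ → ℝ} {d e : ℕ}

def geometrisation (X : ℝ → Fin d → ℝ) (XX : ℝ → ℝ → Fin d → Fin d → ℝ) :
    ℝ → ℝ → Fin d → Fin d → ℝ :=
  fun s t α β => (XX s t α β - XX s t β α) / 2 + (X t α - X s α) * (X t β - X s β) / 2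

def SatisfiesChen (T : ℝ) (X : ℝ → Fin d → ℝ) (XX : ℝ → ℝ → Fin d → Fin d → ℝ) : Prop :=
  ∀ s u t : ℝ, 0 ≤ s → s ≤ u → u ≤ t → t ≤ T → ∀ α β : Fin d,
    XX s t α β = XX s u α β + (X u α - X s α) * (X t β - X u β) + XX u t α β

/-- The first-order germ `H'_s X_{st}`. -/
def incrementGerm (X : ℝ → Fin d → ℝ) (H' : ℝ → Fin d → Fin e → ℝ) (s t : ℝ) (i : Fin e) : ℝ :=
  ∑ γ, (X t γ - X s γ) * H' s γ i

/-- The second-order germ `(H'_s ⊗ H'_s) 𝕏_{st}`. -/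
def liftGerm (H' : ℝ → Fin d → Fin e → ℝ) (XX : ℝ → ℝ → Fin d → Fin d → ℝ) (s t : ℝ)
    (i j : Fin e) : ℝ :=
  ∑ α, ∑ β, H' s α i * H' s β j * XX s t α β

/-- `HH` is the second-order part of the lift `↑_𝕏(H,H')`. -/
def IsLift (T : ℝ) (ω : ℝ → ℝ → ℝ) (H' : ℝ → Fin d → Fin e → ℝ)
    (XX : ℝ → ℝ → Fin d → Fin d → ℝ) (HH : ℝ → ℝ → Fin e → Fin e → ℝ) : Prop :=
  IsNegligible T ω (fun s t i j => HH s t i j - liftGerm H' XX s t i j)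

variable {X : ℝ → Fin d → ℝ} {XX YY : ℝ → ℝ → Fin d → Fin d → ℝ}

lemma IsRoughPath.satisfiesChen (hX : IsRoughPath T p ω X XX) : SatisfiesChen T X XX :=
  hX.2.2.2

namespace SatisfiesChen

lemma geometrisation (hXX : SatisfiesChen T X XX) : SatisfiesChen T X (geometrisation X XX) := by
  intro s u t hs hsu hut htT α β
  simp only [_root_.geometrisation]
  rw [hXX s u t hs hsu hut htT α β, hXX s u t hs hsu hut htT β α]
  ring

lemma isAdditive_sub (hXX : SatisfiesChen T X XX) (hYY : SatisfiesChen T X YY) (α β : Fin d) :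
    IsAdditive T (fun s t => XX s t α β - YY s t α β) := by
  intro s u t hs hsu hut htT
  simp only
  rw [hXX s u t hs hsu hut htT α β, hYY s u t hs hsu hut htT α β]
  ring

lemma isAdditive_bracket (hXX : SatisfiesChen T X XX) (α β : Fin d) :
    IsAdditive T (fun s t => bracket X XX s t α β) := by
  intro s u t hs hsu hut htT
  simp only [bracket]
  rw [hXX s u t hs hsu hut htT α β, hXX s u t hs hsu hut htT β α]
  ring

end SatisfiesChen

variable {H' : ℝ → Fin d → Fin e → ℝ}

lemma liftGerm_transpose (s t : ℝ) (i j : Fin e) :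
    liftGerm H' (fun s t α β => XX s t β α) s t i j = liftGerm H' XX s t j i := by
  rw [liftGerm, liftGerm, Finset.sum_comm]
  simp only [mul_comm (H' s _ i)]

lemma liftGerm_increment_mul (s t : ℝ) (i j : Fin e) :
    liftGerm H' (fun s t α β => (X t α - X s α) * (X t β - X s β)) s t i j =
      incrementGerm X H' s t i * incrementGerm X H' s t j := by
  rw [liftGerm, incrementGerm, incrementGerm, Finset.sum_mul_sum]
  exact Finset.sum_congr rfl fun α _ => Finset.sum_congr rfl fun β _ => by ring

lemma liftGerm_geometrisation (s t : ℝ) (i j : Fin e) :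
    liftGerm H' (geometrisation X XX) s t i j =
      (liftGerm H' XX s t i j - liftGerm H' XX s t j i) / 2 +
        incrementGerm X H' s t i * incrementGerm X H' s t j / 2 := by
  rw [← liftGerm_transpose (XX := XX) s t i j, ← liftGerm_increment_mul]
  simp only [liftGerm, geometrisation, mul_add, mul_sub, mul_div_assoc', Finset.sum_add_distrib,
    Finset.sum_sub_distrib, ← Finset.sum_div]

lemma liftGerm_bracket (s t : ℝ) (i j : Fin e) :
    liftGerm H' (bracket X XX) s t i j =
      incrementGerm X H' s t i * incrementGerm X H' s t j -
        (liftGerm H' XX s t i j + liftGerm H' XX s t j i) := by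
  rw [← liftGerm_transpose (XX := XX) s t i j, ← liftGerm_increment_mul]
  simp only [liftGerm, bracket, mul_add, mul_sub, Finset.sum_add_distrib, Finset.sum_sub_distrib]

end RoughPaths

section Lifts

variable {T p : ℝ} {ω : ℝ → ℝ → ℝ} {d e : ℕ} {X : ℝ → Fin d → ℝ}
  {XX : ℝ → ℝ → Fin d → Fin d → ℝ} {H : ℝ → Fin e → ℝ} {H' : ℝ → Fin d → Fin e → ℝ}
  {HH GG : ℝ → ℝ → Fin e → Fin e → ℝ}

lemma IsControlledPath.isNegligible_mul_sub_mul (hω : IsControl T ω) (hp : 0 < p) (hp3 : p < 3)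
    (hH : IsControlledPath T p ω X H H') (i j : Fin e) :
    IsNegligible T ω (fun s t => (H t i - H s i) * (H t j - H s j) -
      incrementGerm X H' s t i * incrementGerm X H' s t j) := by
  have hinc : ∀ i, PowerBounded T ω (1 / p) (fun s t => H t i - H s i) := fun i =>
    PowerBounded.apply (F := fun s t => H t - H s) hH.1.2 i
  have hrem : ∀ i, PowerBounded T ω (2 / p)
      (fun s t => H t i - H s i - incrementGerm X H' s t i) := fun i =>
    (PowerBounded.apply (F := fun s t => H t - H s - ∑ γ, (X t γ - X s γ) • H' s γ) hH.2.2 i).congr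
      fun s t _ _ _ => by simp [incrementGerm, Finset.sum_apply]
  have h1p : 0 ≤ 1 / p := by positivity
  have h2p : 0 ≤ 2 / p := by positivity
  have h12 : 1 / p ≤ 2 / p := by gcongr; norm_num
  have h3p : 1 < 2 / p + 1 / p := by rw [← add_div, lt_div_iff₀ hp]; linarith
  -- With `R := H - H'X`: `H^i H^j - (H'X)^i (H'X)^j = R^i H^j + H^i R^j - R^i R^j`.
  have hsum := (((hrem i).mul hω h2p h1p (hinc j)).isNegligible h3p).add hω
    ((((hinc i).mul hω h1p h2p (hrem j)).isNegligible (by linarith)).sub hω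
      (((hrem i).mul hω h2p h2p (hrem j)).isNegligible (by linarith)))
  exact hsum.congr fun s t _ _ _ => by ring

lemma IsLift.isNegligible_apply (hHH : IsLift T ω H' XX HH) (i j : Fin e) :
    IsNegligible T ω (fun s t => HH s t i j - liftGerm H' XX s t i j) :=
  (IsNegligible.apply hHH i).apply j

lemma IsLift.isNegligible_geometrisation_sub (hω : IsControl T ω) (hp : 0 < p) (hp3 : p < 3)
    (hH : IsControlledPath T p ω X H H') (hHH : IsLift T ω H' XX HH)
    (hGG : IsLift T ω H' (geometrisation X XX) GG) (i j : Fin e) :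
    IsNegligible T ω (fun s t => geometrisation H HH s t i j - GG s t i j) := by
  have hsum := ((((hHH.isNegligible_apply i j).sub hω (hHH.isNegligible_apply j i)).const_smul
    (1 / 2)).sub hω (hGG.isNegligible_apply i j)).add hω
      ((hH.isNegligible_mul_sub_mul hω hp hp3 i j).const_smul (1 / 2))
  refine hsum.congr fun s t _ _ _ => ?_
  simp only [smul_eq_mul, liftGerm_geometrisation, geometrisation]
  ring

lemma IsLift.isNegligible_bracket_sub (hω : IsControl T ω) (hp : 0 < p) (hp3 : p < 3)
    (hH : IsControlledPath T p ω X H H') (hHH : IsLift T ω H' XX HH) (i j : Fin e) :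
    IsNegligible T ω (fun s t => bracket H HH s t i j - liftGerm H' (bracket X XX) s t i j) := by
  have hsum := ((hH.isNegligible_mul_sub_mul hω hp hp3 i j).sub hω
    (hHH.isNegligible_apply i j)).sub hω (hHH.isNegligible_apply j i)
  refine hsum.congr fun s t _ _ _ => ?_
  simp only [liftGerm_bracket, bracket]
  ring

end Lifts

theorem statement11_general (T p : ℝ) (hp1 : 1 ≤ p) (hp3 : p < 3) (d e : ℕ)
    (ω : ℝ → ℝ → ℝ) (hω : IsControl T ω)
    (X : ℝ → Fin d → ℝ) (XX : ℝ → ℝ → Fin d → Fin d → ℝ)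
    (H : ℝ → Fin e → ℝ) (H' : ℝ → Fin d → Fin e → ℝ)
    (hH : IsControlledPath T p ω X H H')
    (HH : ℝ → ℝ → Fin e → Fin e → ℝ)
    (hHHrp : IsRoughPath T p ω H HH)
    (hHHlift : ∃ C θ : ℝ, 1 < θ ∧ ∀ s t : ℝ, 0 ≤ s → s ≤ t → t ≤ T →
      ‖(fun (i j : Fin e) => HH s t i j -
          ∑ α, ∑ β, H' s α i * H' s β j * XX s t α β)‖ ≤ C * ω s t ^ θ)
    (GG : ℝ → ℝ → Fin e → Fin e → ℝ)
    (hGGrp : IsRoughPath T p ω H GG)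
    (hGGlift : ∃ C θ : ℝ, 1 < θ ∧ ∀ s t : ℝ, 0 ≤ s → s ≤ t → t ≤ T →
      ‖(fun (i j : Fin e) => GG s t i j - ∑ α, ∑ β, H' s α i * H' s β j *
          ((XX s t α β - XX s t β α) / 2 + (X t α - X s α) * (X t β - X s β) / 2))‖
        ≤ C * ω s t ^ θ) :
    (∀ s t : ℝ, 0 ≤ s → s ≤ t → t ≤ T → ∀ i j : Fin e,
      (HH s t i j - HH s t j i) / 2 + (H t i - H s i) * (H t j - H s j) / 2 = GG s t i j) ∧
    ((∀ s t : ℝ, 0 ≤ s → s ≤ t → t ≤ T → ∀ α β : Fin d, bracket X XX s t α β = 0) →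
      ∀ s t : ℝ, 0 ≤ s → s ≤ t → t ≤ T → ∀ i j : Fin e, bracket H HH s t i j = 0) := by
  have hp : 0 < p := by linarith
  have hHH : IsLift T ω H' XX HH := hHHlift
  have hGG : IsLift T ω H' (geometrisation X XX) GG := hGGlift
  refine ⟨fun s t hs hst htT i j => ?_, fun hgeo s t hs hst htT i j => ?_⟩
  · have hadd := hHHrp.satisfiesChen.geometrisation.isAdditive_sub hGGrp.satisfiesChen i j
    exact sub_eq_zero.mp <| hadd.eq_zero_of_isNegligible hω
      (hHH.isNegligible_geometrisation_sub hω hp hp3 hH hGG i j) hs hst htT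
  · have hbracket : IsNegligible T ω (fun s t => bracket H HH s t i j) :=
      (hHH.isNegligible_bracket_sub hω hp hp3 hH i j).congr fun s t hs hst htT => by
        simp [liftGerm, hgeo s t hs hst htT]
    exact (hHHrp.satisfiesChen.isAdditive_bracket i j).eq_zero_of_isNegligible hω hbracket
      hs hst htT

/-- Lifting commutes with geometrisation: the geometrisation of the lift
`↑_𝕏(H,H')` is the lift `↑_{g𝕏}(H,H')`; in particular lifts of geometric rough paths are
geometric. -/
theorem statement11 (T p : ℝ) (hT : 0 ≤ T) (hp1 : 1 ≤ p) (hp3 : p < 3) (d e : ℕ)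
    (ω : ℝ → ℝ → ℝ) (hω : IsControl T ω)
    (X : ℝ → Fin d → ℝ) (XX : ℝ → ℝ → Fin d → Fin d → ℝ)
    (hX : IsRoughPath T p ω X XX)
    (H : ℝ → Fin e → ℝ) (H' : ℝ → Fin d → Fin e → ℝ)
    (hH : IsControlledPath T p ω X H H')
    (HH : ℝ → ℝ → Fin e → Fin e → ℝ)
    (hHHrp : IsRoughPath T p ω H HH)
    (hHHlift : ∃ C θ : ℝ, 1 < θ ∧ ∀ s t : ℝ, 0 ≤ s → s ≤ t → t ≤ T →
      ‖(fun (i j : Fin e) => HH s t i j -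
          ∑ α, ∑ β, H' s α i * H' s β j * XX s t α β)‖ ≤ C * ω s t ^ θ)
    (GG : ℝ → ℝ → Fin e → Fin e → ℝ)
    (hGGrp : IsRoughPath T p ω H GG)
    (hGGlift : ∃ C θ : ℝ, 1 < θ ∧ ∀ s t : ℝ, 0 ≤ s → s ≤ t → t ≤ T →
      ‖(fun (i j : Fin e) => GG s t i j - ∑ α, ∑ β, H' s α i * H' s β j *
          ((XX s t α β - XX s t β α) / 2 + (X t α - X s α) * (X t β - X s β) / 2))‖
        ≤ C * ω s t ^ θ) :
    (∀ s t : ℝ, 0 ≤ s → s ≤ t → t ≤ T → ∀ i j : Fin e,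
      (HH s t i j - HH s t j i) / 2 + (H t i - H s i) * (H t j - H s j) / 2 = GG s t i j) ∧
    ((∀ s t : ℝ, 0 ≤ s → s ≤ t → t ≤ T → ∀ α β : Fin d, bracket X XX s t α β = 0) →
      ∀ s t : ℝ, 0 ≤ s → s ≤ t → t ≤ T → ∀ i j : Fin e, bracket H HH s t i j = 0) :=
  statement11_general T p hp1 hp3 d e ω hω X XX H H' hH HH hHHrp hHHlift GG hGGrp hGGlift
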